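/- Torus case of Lemma 2.2 (equidistribution of the full sequence when the factorisation has G' = G): There is a constant C ≥ 1 depending only on m such that the following holds whenever A ≥ 2C, M ≥ 2, and N is sufficiently large in terms of M and A. Suppose g, ε, g', γ : ℕ → 𝕋^m satisfy g(n) = ε(n) + g'(n) + γ(n) for all 1 ≤ n ≤ N, where ε is (M,N)-smooth, γ is periodic with some period at most M, and the finite sequence (g'(n))_{n ≤ N} is totally M^{−A}-equidistributed in 𝕋^m. Then the finite sequence (g(n))_{n ≤ N} is totally M^{−A/(2C)}-equidistributed in 𝕋^m. -/

import Mathlib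

open MeasureTheory

noncomputable section

instance : Fact ((0:ℝ) < 1) := ⟨one_pos⟩

/-- The `m`-dimensional torus `(ℝ/ℤ)^m`. -/
abbrev Torus (m : ℕ) := Fin m → AddCircle (1:ℝ)

/-- The Lipschitz norm of `F : 𝕋^m → ℝ`: sup-norm plus the best Lipschitz constant. -/
def lipNorm {m : ℕ} (F : Torus m → ℝ) : ℝ :=
  (⨆ x, |F x|) + sInf {L : ℝ | 0 ≤ L ∧ LipschitzWith (Real.toNNReal L) F}

/-- `(u(n))_{n ≤ N}` is totally `δ`-equidistributed in `𝕋^m`: for every arithmetic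
progression `P ⊆ {1,…,N}` of cardinality at least `δ·N` and every Lipschitz `F` the sum of
`F ∘ u` over `P` is within `δ·‖F‖_Lip·|P|` of `|P|·∫ F dμ`. -/
def TotallyEquidistributed (m N : ℕ) (δ : ℝ) (u : ℕ → Torus m) : Prop :=
  ∀ a d len : ℕ, 0 < d → 0 < len →
    (∀ n < len, 1 ≤ a + n * d ∧ a + n * d ≤ N) →
    δ * N ≤ len →
    ∀ (F : Torus m → ℝ) (L : NNReal), LipschitzWith L F →
      |(∑ n ∈ Finset.range len, F (u (a + n * d))) - len * ∫ x, F x| ≤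
        δ * lipNorm F * len

/-- `ε : ℕ → 𝕋^m` is `(M,N)`-smooth. -/
def SmoothN (m : ℕ) (M : ℝ) (N : ℕ) (ε : ℕ → Torus m) : Prop :=
  ∀ n : ℕ, 1 ≤ n → n ≤ N →
    dist (ε n) 0 ≤ M ∧ dist (ε n) (ε (n - 1)) ≤ M / N

/-!
Cut the progression `a + n d` (`n < len`) into progressions of step `q d` and length at most
`B ≈ len / K`, where `K ≈ δ⁻³`. Along each piece `γ` is constant, because the step is a
multiple of its period, and `ε` moves by at most `B q d M / N`, which is small because
`len · d ≤ 2 N`. So on each piece `g` is uniformly close to a translate of `g'`, and translating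
a Lipschitz function changes neither its Lipschitz norm nor its integral. The equidistribution
of `g'` handles the pieces of length at least `δ^(2C) N`; the remaining ones are too few (there
are `q K ≤ M δ⁻³` pieces in all) to matter.
-/

open Finset

instance (m : ℕ) : IsProbabilityMeasure (volume : Measure (Torus m)) :=
  have : IsProbabilityMeasure (volume : Measure (AddCircle (1:ℝ))) :=
    ⟨by simp [AddCircle.measure_univ]⟩
  inferInstanceAs (IsProbabilityMeasure (Measure.pi fun _ => volume))

section LipNorm

variable {m : ℕ} {F : Torus m → ℝ} {L : NNReal}

lemma lipschitzWith_comp_add_left_iff (c : Torus m) :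
    LipschitzWith L (fun y => F (c + y)) ↔ LipschitzWith L F := by
  refine ⟨fun h => ?_, fun h => h.comp (isometry_add_left c).lipschitz |>.weaken (by simp)⟩
  simpa [Function.comp_def] using h.comp (isometry_add_left (-c)).lipschitz |>.weaken (by simp)

lemma lipNorm_comp_add_left (F : Torus m → ℝ) (c : Torus m) :
    lipNorm (fun y => F (c + y)) = lipNorm F := by
  simp only [lipNorm, lipschitzWith_comp_add_left_iff]
  exact congrArg (· + _) ((Equiv.addLeft c).iSup_comp (g := fun x => |F x|))

lemma sInf_lipschitzWith_nonneg :
    0 ≤ sInf {L : ℝ | 0 ≤ L ∧ LipschitzWith (Real.toNNReal L) F} :=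
  Real.sInf_nonneg fun _ hL => hL.1

lemma abs_le_lipNorm (hF : LipschitzWith L F) (x : Torus m) : |F x| ≤ lipNorm F :=
  (le_ciSup (isCompact_range hF.continuous.abs).bddAbove x).trans
    (le_add_of_nonneg_right sInf_lipschitzWith_nonneg)

lemma lipNorm_nonneg (hF : LipschitzWith L F) : 0 ≤ lipNorm F :=
  (abs_nonneg _).trans (abs_le_lipNorm hF 0)

lemma abs_integral_le_lipNorm (hF : LipschitzWith L F) : |∫ x, F x| ≤ lipNorm F := by
  simpa using norm_integral_le_of_norm_le_const (μ := volume) (f := F)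
    (Filter.Eventually.of_forall fun x => abs_le_lipNorm hF x)

lemma dist_le_lipNorm_mul (hF : LipschitzWith L F) (x y : Torus m) :
    dist (F x) (F y) ≤ lipNorm F * dist x y := by
  have hsInf : dist (F x) (F y) ≤
      sInf {L : ℝ | 0 ≤ L ∧ LipschitzWith (Real.toNNReal L) F} * dist x y := by
    rcases (dist_nonneg (x := x) (y := y)).eq_or_lt with hxy | hxy
    · simp [dist_eq_zero.mp hxy.symm]
    · rw [← div_le_iff₀ hxy]
      refine le_csInf ⟨L, L.coe_nonneg, by rwa [Real.toNNReal_coe]⟩ fun C hC => ?_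
      rw [div_le_iff₀ hxy]
      simpa [hC.1] using hC.2.dist_le_mul x y
  refine hsInf.trans (mul_le_mul_of_nonneg_right ?_ dist_nonneg)
  exact le_add_of_nonneg_left (Real.iSup_nonneg fun x => abs_nonneg (F x))

end LipNorm

lemma SmoothN.dist_le {m N : ℕ} {M : ℝ} {ε : ℕ → Torus m} (hε : SmoothN m M N ε)
    {s t : ℕ} (hst : s ≤ t) (ht : t ≤ N) :
    dist (ε t) (ε s) ≤ (t - s : ℝ) * (M / N) := by
  induction t, hst using Nat.le_induction with
  | base => simp
  | succ t hst ih =>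
    calc dist (ε (t + 1)) (ε s) ≤ dist (ε (t + 1)) (ε t) + dist (ε t) (ε s) :=
          dist_triangle _ _ _
      _ ≤ M / N + (t - s : ℝ) * (M / N) :=
          add_le_add (by simpa using (hε (t + 1) (by omega) ht).2) (ih (by omega))
      _ = ((t + 1 : ℕ) - s : ℝ) * (M / N) := by push_cast; ring

section Discrepancy

variable {m N : ℕ} {F : Torus m → ℝ} {L : NNReal}

lemma sum_sub_card_mul_integral (v : ℕ → Torus m) (t : ℕ) :
    ∑ j ∈ range t, F (v j) - t * ∫ x, F x = ∑ j ∈ range t, (F (v j) - ∫ x, F x) := by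
  simp [sum_sub_distrib]

lemma abs_sum_sub_sum_le_of_dist_le (hF : LipschitzWith L F) {v w : ℕ → Torus m} {t : ℕ}
    {η : ℝ} (h : ∀ j < t, dist (v j) (w j) ≤ η) :
    |∑ j ∈ range t, F (v j) - ∑ j ∈ range t, F (w j)| ≤ t * (lipNorm F * η) := by
  rw [← sum_sub_distrib]
  refine (abs_sum_le_sum_abs _ _).trans ?_
  simpa [Real.dist_eq] using sum_le_card_nsmul _ _ _ fun j hj => (dist_le_lipNorm_mul hF _ _).trans
    (mul_le_mul_of_nonneg_left (h j (mem_range.mp hj)) (lipNorm_nonneg hF))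

/-- Progressions shorter than `δ N` are not covered by the definition: on them the trivial bound
`2 ‖F‖_Lip` per term costs at most `2 δ N ‖F‖_Lip`. -/
lemma TotallyEquidistributed.abs_sum_sub_le {δ : ℝ} {u : ℕ → Torus m}
    (hu : TotallyEquidistributed m N δ u) (hδ : 0 ≤ δ) {a d t : ℕ} (hd : 0 < d)
    (hP : ∀ n < t, 1 ≤ a + n * d ∧ a + n * d ≤ N) (hF : LipschitzWith L F) :
    |∑ n ∈ range t, F (u (a + n * d)) - t * ∫ x, F x| ≤ δ * lipNorm F * (t + 2 * N) := by
  have hL := lipNorm_nonneg hF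
  rcases t.eq_zero_or_pos with rfl | ht
  · simp only [range_zero, sum_empty, CharP.cast_eq_zero, zero_mul, sub_zero, abs_zero]
    positivity
  by_cases hlong : δ * N ≤ t
  · refine (hu a d t hd ht hP hlong F L hF).trans ?_
    gcongr
    linarith [(N.cast_nonneg : (0 : ℝ) ≤ N)]
  · have hterm : ∀ n ∈ range t, |F (u (a + n * d)) - ∫ x, F x| ≤ 2 * lipNorm F :=
      fun n _ => (abs_sub _ _).trans
        (by linarith [abs_le_lipNorm hF (u (a + n * d)), abs_integral_le_lipNorm hF])
    rw [sum_sub_card_mul_integral]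
    calc _ ≤ t * (2 * lipNorm F) := by
          simpa using (abs_sum_le_sum_abs _ _).trans (sum_le_card_nsmul _ _ _ hterm)
      _ ≤ δ * lipNorm F * (t + 2 * N) := by
          nlinarith [mul_le_mul_of_nonneg_right (le_of_not_ge hlong) hL,
            mul_nonneg (mul_nonneg hδ hL) t.cast_nonneg]

end Discrepancy

lemma exists_nat_mul_mem_Icc {y c : ℝ} (hy : 0 < y) (hy1 : y ≤ 1) (hc : 0 ≤ c) :
    ∃ k : ℕ, k * y ∈ Set.Icc c (c + 1) := by
  refine ⟨⌈c / y⌉₊, (div_le_iff₀ hy).mp (Nat.le_ceil _), ?_⟩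
  calc ⌈c / y⌉₊ * y ≤ (c / y + 1) * y := by
        gcongr; exact (Nat.ceil_lt_add_one (by positivity)).le
    _ = c + y := by field_simp
    _ ≤ c + 1 := by linarith

lemma mul_le_two_mul_of_progression {a d len N : ℕ} (hlen : 2 ≤ len)
    (hP : ∀ n < len, 1 ≤ a + n * d ∧ a + n * d ≤ N) : len * d ≤ 2 * N := by
  obtain ⟨l, rfl⟩ : ∃ l, len = l + 1 := ⟨len - 1, by omega⟩
  have hlast := (hP l (by omega)).2
  nlinarith

/-- With `k ≥ 12 δ⁻³` pieces per residue class, `ε` drifts by at most `δ / 3` along each. -/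
lemma factorisation_drift_le {δ M : ℝ} {N len d q k B : ℕ} (hδ : 0 < δ) (hM : 0 ≤ M)
    (hN : 12 ≤ δ ^ 4 * N) (hk : 12 ≤ k * δ ^ 3) (hB : (B : ℝ) ≤ len / k + 1)
    (hlend : (len : ℝ) * d ≤ 2 * N) (hdδ : d * δ ≤ 2) (hqMδ : q * M * δ ^ 2 ≤ 1) :
    B * (q * d) * (M / N) ≤ δ / 3 := by
  have hNpos : (0 : ℝ) < N := pos_of_mul_pos_right (by linarith) (by positivity : 0 ≤ δ ^ 4)
  have hkpos : (0 : ℝ) < k := pos_of_mul_pos_left (by linarith) (by positivity : 0 ≤ δ ^ 3)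
  have h1 : (len * d) * (q * M) / (k * N) ≤ δ / 6 := by
    have h12 : 12 * (q * M) ≤ δ * k :=
      le_of_mul_le_mul_left (by nlinarith) (by positivity : 0 < δ ^ 2)
    rw [div_le_iff₀ (by positivity)]
    nlinarith [mul_le_mul_of_nonneg_right hlend (by positivity : 0 ≤ (q : ℝ) * M)]
  have h2 : d * (q * M) / N ≤ δ / 6 := by
    have h6 : 6 * (d * (q * M)) ≤ δ * N :=
      le_of_mul_le_mul_left (by nlinarith [mul_le_mul hdδ hqMδ (by positivity) zero_le_two])
        (by positivity : 0 < δ ^ 3)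
    rw [div_le_iff₀ hNpos]
    linarith
  calc B * (q * d) * (M / N) ≤ (len / k + 1) * (q * d) * (M / N) := by gcongr
    _ = (len * d) * (q * M) / (k * N) + d * (q * M) / N := by field_simp
    _ ≤ δ / 3 := by linarith

lemma exists_filter_range_mod_div_eq_image {len q B r b : ℕ} (hq : 0 < q) (hB : 0 < B)
    (hr : r < q) : ∃ t ≤ B, {n ∈ range len | (n % q, n / (q * B)) = (r, b)} =
      (range t).image fun j => r + b * (q * B) + j * q := by
  refine ⟨min B ((len - (r + b * (q * B))) ⌈/⌉ q), min_le_left _ _, ?_⟩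
  have hceil (j : ℕ) :
      j < (len - (r + b * (q * B))) ⌈/⌉ q ↔ r + b * (q * B) + j * q < len := by
    rw [← not_le, ceilDiv_le_iff_le_smul hq, smul_eq_mul, mul_comm q j]
    omega
  ext n
  simp only [mem_filter, mem_range, mem_image, Prod.mk.injEq, lt_min_iff, hceil]
  constructor
  · rintro ⟨hn, rfl, rfl⟩
    have hn' : n % q + n / (q * B) * (q * B) + n / q % B * q = n := by
      have h1 := Nat.mod_add_div n q
      have h2 := Nat.mod_add_div (n / q) B
      rw [← Nat.div_div_eq_div_mul]
      linear_combination h1 + q * h2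
    exact ⟨n / q % B, ⟨Nat.mod_lt _ hB, hn'.symm ▸ hn⟩, hn'⟩
  · rintro ⟨j, ⟨hjB, hjlen⟩, rfl⟩
    refine ⟨hjlen, ?_, ?_⟩
    · rw [show r + b * (q * B) + j * q = r + (b * B + j) * q by ring,
        Nat.add_mul_mod_self_right, Nat.mod_eq_of_lt hr]
    · have hlt : r + j * q < q * B := by nlinarith
      rw [show r + b * (q * B) + j * q = r + j * q + b * (q * B) by ring,
        Nat.add_mul_div_right _ _ (by positivity), Nat.div_eq_of_lt hlt, zero_add]

section Factorisation

variable {m N q : ℕ} {M δ' : ℝ} {g ε g' γ : ℕ → Torus m} {F : Torus m → ℝ}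
  {L : NNReal}

/-- Along a progression whose step is a multiple of the period of `γ`, the summand `γ` is
constant and `ε` drifts little, so `g` is a small perturbation of a translate of `g'`. -/
lemma abs_sum_sub_le_of_factorisation_on_progression
    (hg : ∀ n, 1 ≤ n → n ≤ N → g n = ε n + g' n + γ n) (hε : SmoothN m M N ε)
    (hγ : Function.Periodic γ q) (hg' : TotallyEquidistributed m N δ' g') (hδ' : 0 ≤ δ')
    {a e t B : ℕ} (hqe : 0 < q * e) (htB : t ≤ B)
    (hP : ∀ j < t, 1 ≤ a + j * (q * e) ∧ a + j * (q * e) ≤ N) (hF : LipschitzWith L F) :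
    |∑ j ∈ range t, F (g (a + j * (q * e))) - t * ∫ x, F x| ≤
      lipNorm F * (t * (B * (q * e) * (M / N) + δ') + 2 * δ' * N) := by
  have hL := lipNorm_nonneg hF
  rcases t.eq_zero_or_pos with rfl | ht
  · simp only [range_zero, sum_empty, CharP.cast_eq_zero, zero_mul, sub_zero, abs_zero]
    positivity
  have hM : 0 ≤ M := by
    obtain ⟨ha, haN⟩ : 1 ≤ a ∧ a ≤ N := by simpa using hP 0 ht
    exact dist_nonneg.trans (hε a ha haN).1
  set c := ε a + γ a
  have hclose : ∀ j < t,
      dist (g (a + j * (q * e))) (c + g' (a + j * (q * e))) ≤ B * (q * e) * (M / N) := by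
    intro j hj
    obtain ⟨h1, hN⟩ := hP j hj
    have hγj : γ (a + j * (q * e)) = γ a := by
      simpa [mul_comm, mul_left_comm, mul_assoc] using hγ.nat_mul (j * e) a
    have hgj : g (a + j * (q * e)) = ε (a + j * (q * e)) + (γ a + g' (a + j * (q * e))) := by
      rw [hg _ h1 hN, hγj]
      abel
    have hc : c + g' (a + j * (q * e)) = ε a + (γ a + g' (a + j * (q * e))) := by
      simp only [c]
      abel
    rw [hgj, hc, dist_add_right]
    calc _ ≤ ((a + j * (q * e) : ℕ) - a : ℝ) * (M / N) :=
          hε.dist_le (Nat.le_add_right _ _) hN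
      _ ≤ B * (q * e) * (M / N) := by
          push_cast
          rw [add_sub_cancel_left]
          gcongr
          exact_mod_cast hj.le.trans htB
  calc _ = |(∑ j ∈ range t, F (g (a + j * (q * e)))
          - ∑ j ∈ range t, F (c + g' (a + j * (q * e))))
        + (∑ j ∈ range t, F (c + g' (a + j * (q * e))) - t * ∫ x, F (c + x))| := by
        rw [integral_add_left_eq_self F c, sub_add_sub_cancel]
    _ ≤ t * (lipNorm F * (B * (q * e) * (M / N)))
        + δ' * lipNorm (fun y => F (c + y)) * (t + 2 * N) :=
        (abs_add_le _ _).trans (add_le_add (abs_sum_sub_sum_le_of_dist_le hF hclose)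
          (hg'.abs_sum_sub_le hδ' hqe hP ((lipschitzWith_comp_add_left_iff c).mpr hF)))
    _ = _ := by rw [lipNorm_comp_add_left]; ring

/-- Split the progression into the `q * K` pieces `{n : n % q = r, n / (q B) = b}`: each is a
progression of step `q d` and length at most `B`. -/
lemma abs_sum_sub_le_of_factorisation
    (hg : ∀ n, 1 ≤ n → n ≤ N → g n = ε n + g' n + γ n) (hε : SmoothN m M N ε)
    (hq : 0 < q) (hγ : Function.Periodic γ q) (hg' : TotallyEquidistributed m N δ' g')
    (hδ' : 0 ≤ δ') {a d len B K : ℕ} (hd : 0 < d) (hB : 0 < B) (hcover : len ≤ q * B * K)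
    (hP : ∀ n < len, 1 ≤ a + n * d ∧ a + n * d ≤ N) (hF : LipschitzWith L F) :
    |∑ n ∈ range len, F (g (a + n * d)) - len * ∫ x, F x| ≤
      lipNorm F * (len * (B * (q * d) * (M / N) + δ') + q * K * (2 * δ' * N)) := by
  have hmaps : ∀ n ∈ range len, (n % q, n / (q * B)) ∈ range q ×ˢ range K := fun n hn => by
    simp only [mem_product, mem_range] at hn ⊢
    exact ⟨Nat.mod_lt _ hq, (Nat.div_lt_iff_lt_mul (by positivity)).mpr (by nlinarith)⟩
  have hfiber : ∀ p ∈ range q ×ˢ range K,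
      |∑ n ∈ range len with (n % q, n / (q * B)) = p, (F (g (a + n * d)) - ∫ x, F x)| ≤
        lipNorm F * (#{n ∈ range len | (n % q, n / (q * B)) = p} *
          (B * (q * d) * (M / N) + δ') + 2 * δ' * N) := by
    rintro ⟨r, b⟩ hp
    obtain ⟨t, htB, heq⟩ := exists_filter_range_mod_div_eq_image (len := len) (b := b) hq hB
      (mem_range.mp (mem_product.mp hp).1)
    have hinj : Function.Injective fun j => r + b * (q * B) + j * q := fun i j hij => by
      simpa [hq.ne'] using hij
    have hlt : ∀ j < t, r + b * (q * B) + j * q < len := fun j hj => by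
      have hmem := heq ▸ mem_image_of_mem (fun j => r + b * (q * B) + j * q) (mem_range.mpr hj)
      exact mem_range.mp (mem_filter.mp hmem).1
    rw [heq, sum_image hinj.injOn, card_image_of_injective _ hinj, card_range,
      ← sum_sub_card_mul_integral]
    have hstep (j : ℕ) :
        a + (r + b * (q * B) + j * q) * d = a + (r + b * (q * B)) * d + j * (q * d) := by
      ring
    simp only [hstep]
    exact abs_sum_sub_le_of_factorisation_on_progression hg hε hγ hg' hδ' (Nat.mul_pos hq hd)
      htB (fun j hj => hstep j ▸ hP _ (hlt j hj)) hF
  calc _ = |∑ p ∈ range q ×ˢ range K,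
        ∑ n ∈ range len with (n % q, n / (q * B)) = p, (F (g (a + n * d)) - ∫ x, F x)| := by
        rw [sum_sub_card_mul_integral, sum_fiberwise_of_maps_to hmaps]
    _ ≤ ∑ p ∈ range q ×ˢ range K,
          lipNorm F * (#{n ∈ range len | (n % q, n / (q * B)) = p} *
            (B * (q * d) * (M / N) + δ') + 2 * δ' * N) :=
        (abs_sum_le_sum_abs _ _).trans (sum_le_sum hfiber)
    _ = _ := by
        rw [← mul_sum, sum_add_distrib, ← sum_mul, ← Nat.cast_sum,
          ← card_eq_sum_card_fiberwise hmaps]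
        simp only [sum_const, card_product, card_range, nsmul_eq_mul]
        push_cast
        ring

theorem totallyEquidistributed_of_factorisation {δ : ℝ} (hM : 2 ≤ M) (hδ : 0 < δ)
    (hMδ : M * δ ≤ 1) (hN : 12 ≤ δ ^ 4 * N)
    (hg : ∀ n, 1 ≤ n → n ≤ N → g n = ε n + g' n + γ n) (hε : SmoothN m M N ε)
    (hq : 0 < q) (hqM : (q : ℝ) ≤ M) (hγ : Function.Periodic γ q)
    (hg' : TotallyEquidistributed m N (δ ^ 20) g') : TotallyEquidistributed m N δ g := by
  intro a d len hd hlen hP hlenN F L hF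
  have hδ2 : δ ≤ 1 / 2 := by nlinarith
  have hδ3 : δ ^ 3 ≤ 1 := pow_le_one₀ hδ.le (by linarith)
  have hNpos : (0 : ℝ) < N := pos_of_mul_pos_right (by linarith) (by positivity : 0 ≤ δ ^ 4)
  obtain ⟨k, hk1, hk2⟩ :=
    exists_nat_mul_mem_Icc (pow_pos hδ 3) hδ3 (by norm_num : (0 : ℝ) ≤ 12)
  norm_num at hk2
  have hk : 0 < k := by
    have : (0 : ℝ) < k := by nlinarith [pow_pos hδ 3]
    exact_mod_cast this
  set B := len / k + 1
  have hcover : len ≤ q * B * k := (Nat.lt_mul_div_succ len hk).le.trans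
    (by rw [mul_comm k, mul_assoc]; exact Nat.le_mul_of_pos_left _ hq)
  have hlen2 : 2 ≤ len := by
    have : (2 : ℝ) ≤ len := by
      nlinarith [mul_le_mul_of_nonneg_right hδ3 (by positivity : 0 ≤ δ * N)]
    exact_mod_cast this
  have hlend : (len : ℝ) * d ≤ 2 * N := by exact_mod_cast mul_le_two_mul_of_progression hlen2 hP
  have hqδ : q * δ ≤ 1 := by nlinarith
  have hdrift : B * (q * d) * (M / N) ≤ δ / 3 := by
    refine factorisation_drift_le hδ (by linarith) hN hk1 ?_ hlend ?_ ?_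
    · simp only [B, Nat.cast_add, Nat.cast_one]
      gcongr
      exact Nat.cast_div_le
    · exact le_of_mul_le_mul_right
        (by nlinarith [mul_le_mul_of_nonneg_left hlenN (d.cast_nonneg : (0 : ℝ) ≤ d)]) hNpos
    · nlinarith [mul_le_mul hqδ hMδ (by positivity) zero_le_one]
  have hδ20 : δ ^ 20 ≤ δ / 3 := calc
    δ ^ 20 = δ * δ ^ 19 := by ring
    _ ≤ δ * (1 / 2) ^ 19 := by gcongr
    _ ≤ δ / 3 := by nlinarith
  have hoverhead : q * k * (2 * δ ^ 20 * N) ≤ δ * len / 3 := calc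
    q * k * (2 * δ ^ 20 * N) = 2 * ((q * δ) * (k * δ ^ 3)) * δ ^ 14 * (δ * (δ * N)) := by ring
    _ ≤ 2 * (1 * 13) * (1 / 2) ^ 14 * (δ * len) := by gcongr
    _ ≤ δ * len / 3 := by nlinarith
  calc _ ≤ lipNorm F * (len * (B * (q * d) * (M / N) + δ ^ 20) + q * k * (2 * δ ^ 20 * N)) :=
        abs_sum_sub_le_of_factorisation hg hε hq hγ hg' (by positivity) hd (Nat.succ_pos _)
          hcover hP hF
    _ ≤ lipNorm F * (len * (δ / 3 + δ / 3) + δ * len / 3) :=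
        mul_le_mul_of_nonneg_left (by gcongr) (lipNorm_nonneg hF)
    _ = δ * lipNorm F * len := by ring

end Factorisation

theorem torus_equidistribution_of_factorisation_general (m : ℕ) :
    ∃ C : ℝ, 1 ≤ C ∧
      ∀ A M : ℝ, 2 * C ≤ A → 2 ≤ M →
        ∃ N₀ : ℕ, ∀ N : ℕ, N₀ ≤ N →
          ∀ g ε g' γ : ℕ → Torus m,
            (∀ n : ℕ, 1 ≤ n → n ≤ N → g n = ε n + g' n + γ n) →
            SmoothN m M N ε →
            (∃ q : ℕ, 1 ≤ q ∧ (q : ℝ) ≤ M ∧ ∀ n : ℕ, γ (n + q) = γ n) →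
            TotallyEquidistributed m N (M ^ (-A)) g' →
            TotallyEquidistributed m N (M ^ (-(A / (2 * C)))) g := by
  refine ⟨10, by norm_num, fun A M hA hM => ?_⟩
  set δ := M ^ (-(A / (2 * 10)))
  have hδ : 0 < δ := Real.rpow_pos_of_pos (by linarith) _
  have hMδ : M * δ ≤ 1 := by
    rw [mul_comm, ← Real.rpow_add_one (by linarith)]
    exact Real.rpow_le_one_of_one_le_of_nonpos (by linarith) (by linarith)
  have hδ20 : M ^ (-A) = δ ^ 20 := by
    rw [← Real.rpow_natCast, ← Real.rpow_mul (by linarith)]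
    ring_nf
  refine ⟨⌈12 / δ ^ 4⌉₊, fun N hN g ε g' γ hg hε ⟨q, hq, hqM, hγ⟩ hg' => ?_⟩
  have hN' : 12 ≤ δ ^ 4 * N :=
    (div_le_iff₀' (by positivity)).mp ((Nat.le_ceil _).trans (by exact_mod_cast hN))
  rw [hδ20] at hg'
  exact totallyEquidistributed_of_factorisation hM hδ hMδ hN' hg hε hq hqM hγ hg'

/-- **Torus case of Lemma 2.2**: if `g = ε + g' + γ` with `ε` smooth, `γ` periodic with
period at most `M` and `g'` totally `M⁻ᴬ`-equidistributed, then `g` itself is totally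
`M^{-A/(2C)}`-equidistributed, for some `C = C(m) ≥ 1`, provided `A ≥ 2C`, `M ≥ 2` and `N`
is sufficiently large in terms of `M` and `A`. -/
theorem torus_equidistribution_of_factorisation (m : ℕ) (hm : 0 < m) :
    ∃ C : ℝ, 1 ≤ C ∧
      ∀ A M : ℝ, 2 * C ≤ A → 2 ≤ M →
        ∃ N₀ : ℕ, ∀ N : ℕ, N₀ ≤ N →
          ∀ g ε g' γ : ℕ → Torus m,
            (∀ n : ℕ, 1 ≤ n → n ≤ N → g n = ε n + g' n + γ n) →
            SmoothN m M N ε →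
            (∃ q : ℕ, 1 ≤ q ∧ (q : ℝ) ≤ M ∧ ∀ n : ℕ, γ (n + q) = γ n) →
            TotallyEquidistributed m N (M ^ (-A)) g' →
            TotallyEquidistributed m N (M ^ (-(A / (2 * C)))) g :=
  torus_equidistribution_of_factorisation_general m
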